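/- Let f be increasing, differentiable, and nonnegative on [0,1] with f(b) finite and f(a) ≥ 0 (and f vanishing at or below a in the sense f⁻¹(0) ≤ a). Then for the (Lebesgue)² q-measure μ(A) = ν(A)², ∫_a^b f dμ = ∫_0^b f dμ - ∫_0^a f dμ - 2(b-a)·∫_0^a f(t) dt. -/

import Mathlib

/-!
For `λ > 0` put `E = {f > λ}`, `u = ν((0,a) ∩ E)` and `v = ν((a,b) ∩ E)`, so that
`ν((0,b) ∩ E) = u + v`. If `u ≠ 0`, some point of `(0,a)` lies in `E`, hence by monotonicity
all of `(a,b)` does and `v = b - a`. Either way `v² = (u + v)² - u² - 2(b - a)u`; integrating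
over `λ > 0` gives the identity, the last term by the layer-cake formula `∫_0^a f = ∫_0^∞ u dλ`.
-/

open MeasureTheory Set

/-- The (Lebesgue)² quantum measure: the square of Lebesgue measure. -/
noncomputable def lebSq (A : Set ℝ) : ℝ := (volume A).toReal ^ 2

/-- Quantum integral of a nonnegative function over `(a, b)` for the (Lebesgue)² q-measure. -/
noncomputable def qInt (a b : ℝ) (f : ℝ → ℝ) : ℝ :=
  ∫ lam in Set.Ioi (0 : ℝ), lebSq (Set.Ioo a b ∩ {x | f x > lam})

noncomputable def superlevelVol (c d : ℝ) (f : ℝ → ℝ) (lam : ℝ) : ℝ :=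
  (volume (Ioo c d ∩ {x | f x > lam})).toReal

lemma qInt_eq_integral_sq_superlevelVol (c d : ℝ) (f : ℝ → ℝ) :
    qInt c d f = ∫ lam in Ioi 0, superlevelVol c d f lam ^ 2 := rfl

lemma volume_Ioo_inter_ne_top (c d : ℝ) (E : Set ℝ) : volume (Ioo c d ∩ E) ≠ ⊤ :=
  ((measure_mono inter_subset_left).trans_lt measure_Ioo_lt_top).ne

lemma volume_Ioo_inter_add_volume_Ioo_inter {a b c : ℝ} (hca : c ≤ a) (hab : a ≤ b)
    (E : Set ℝ) : volume (Ioo c a ∩ E) + volume (Ioo a b ∩ E) = volume (Ioo c b ∩ E) := by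
  have hIoc : ∀ x y, volume (Ioo x y ∩ E) = volume (Ioc x y ∩ E) := fun _ _ =>
    measure_congr (Ioo_ae_eq_Ioc.inter (ae_eq_refl E))
  have hlow : Ioc c b ∩ E ∩ Iic a = Ioc c a ∩ E := by
    ext x
    simp only [mem_inter_iff, mem_Ioc, mem_Iic]
    exact ⟨fun ⟨⟨⟨h1, _⟩, hE⟩, h3⟩ => ⟨⟨h1, h3⟩, hE⟩,
      fun ⟨⟨h1, h2⟩, hE⟩ => ⟨⟨⟨h1, h2.trans hab⟩, hE⟩, h2⟩⟩
  have hhigh : (Ioc c b ∩ E) \ Iic a = Ioc a b ∩ E := by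
    ext x
    simp only [mem_inter_iff, mem_sdiff, mem_Ioc, mem_Iic, not_le]
    exact ⟨fun ⟨⟨⟨_, h2⟩, hE⟩, h3⟩ => ⟨⟨h3, h2⟩, hE⟩,
      fun ⟨⟨h1, h2⟩, hE⟩ => ⟨⟨⟨hca.trans_lt h1, h2⟩, hE⟩, h1⟩⟩
  rw [hIoc, hIoc, hIoc, ← measure_inter_add_sdiff (Ioc c b ∩ E) measurableSet_Iic, hlow, hhigh]

lemma integrableOn_Ioi_of_antitone {g : ℝ → ℝ} (hg : Antitone g) {B : ℝ}
    (hB : ∀ x, B ≤ x → g x = 0) (a : ℝ) : IntegrableOn g (Ioi a) :=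
  ((hg.antitoneOn (Icc a B)).integrableOn_isCompact isCompact_Icc).of_forall_sdiff_eq_zero
    measurableSet_Ioi fun x ⟨hax, hx⟩ => hB x (not_le.1 fun hxB => hx ⟨hax.le, hxB⟩).le

section superlevelVol

variable {f : ℝ → ℝ} {a b c d : ℝ}

lemma superlevelVol_nonneg (lam : ℝ) : 0 ≤ superlevelVol c d f lam := ENNReal.toReal_nonneg

lemma superlevelVol_antitone : Antitone (superlevelVol c d f) := fun _ _ hxy =>
  ENNReal.toReal_mono (volume_Ioo_inter_ne_top c d _)
    (measure_mono (inter_subset_inter_right _ fun _ hz => hxy.trans_lt hz))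

lemma superlevelVol_eq_zero_of_le {M lam : ℝ} (hM : ∀ x ∈ Ioo c d, f x ≤ M) (hlam : M ≤ lam) :
    superlevelVol c d f lam = 0 := by
  have : Ioo c d ∩ {x | f x > lam} = ∅ :=
    eq_empty_of_forall_notMem fun x ⟨hx, hfx⟩ => (hM x hx).not_gt (hlam.trans_lt hfx)
  simp [superlevelVol, this]

lemma integrableOn_superlevelVol {M : ℝ} (hM : ∀ x ∈ Ioo c d, f x ≤ M) :
    IntegrableOn (superlevelVol c d f) (Ioi 0) :=
  integrableOn_Ioi_of_antitone superlevelVol_antitone (fun _ => superlevelVol_eq_zero_of_le hM) 0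

lemma integrableOn_sq_superlevelVol {M : ℝ} (hM : ∀ x ∈ Ioo c d, f x ≤ M) :
    IntegrableOn (fun lam => superlevelVol c d f lam ^ 2) (Ioi 0) :=
  integrableOn_Ioi_of_antitone
    (fun _ y hxy => pow_le_pow_left₀ (superlevelVol_nonneg y) (superlevelVol_antitone hxy) 2)
    (fun _ hlam => by rw [superlevelVol_eq_zero_of_le hM hlam, zero_pow two_ne_zero]) 0

lemma superlevelVol_add (hca : c ≤ a) (hab : a ≤ b) (lam : ℝ) :
    superlevelVol c a f lam + superlevelVol a b f lam = superlevelVol c b f lam := by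
  rw [superlevelVol, superlevelVol, superlevelVol, ← ENNReal.toReal_add
    (volume_Ioo_inter_ne_top _ _ _) (volume_Ioo_inter_ne_top _ _ _),
    volume_Ioo_inter_add_volume_Ioo_inter hca hab]

lemma superlevelVol_eq_sub_of_ne_zero (hf : MonotoneOn f (Ioo c b)) (hab : a ≤ b) {lam : ℝ}
    (h : superlevelVol c a f lam ≠ 0) : superlevelVol a b f lam = b - a := by
  have hvol : volume (Ioo c a ∩ {x | f x > lam}) ≠ 0 := fun h0 => h (by simp [superlevelVol, h0])
  obtain ⟨x, ⟨hcx, hxa⟩, hfx⟩ := nonempty_of_measure_ne_zero hvol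
  have hsub : Ioo a b ⊆ {x | f x > lam} := fun y ⟨hay, hyb⟩ =>
    hfx.trans_le (hf ⟨hcx, hxa.trans_le hab⟩ ⟨hcx.trans (hxa.trans hay), hyb⟩ (hxa.trans hay).le)
  rw [superlevelVol, inter_eq_left.2 hsub, Real.volume_Ioo,
    ENNReal.toReal_ofReal (sub_nonneg.2 hab)]

lemma sq_superlevelVol_eq (hf : MonotoneOn f (Ioo c b)) (hca : c ≤ a) (hab : a ≤ b) (lam : ℝ) :
    superlevelVol a b f lam ^ 2 = superlevelVol c b f lam ^ 2 - superlevelVol c a f lam ^ 2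
      - 2 * (b - a) * superlevelVol c a f lam := by
  rw [← superlevelVol_add hca hab]
  rcases eq_or_ne (superlevelVol c a f lam) 0 with h | h
  · rw [h]; ring
  · rw [superlevelVol_eq_sub_of_ne_zero hf hab h]; ring

lemma intervalIntegral_eq_integral_superlevelVol (hcd : c ≤ d)
    (hf : IntervalIntegrable f volume c d) (hpos : ∀ x ∈ Ioo c d, 0 ≤ f x) :
    ∫ t in c..d, f t = ∫ lam in Ioi 0, superlevelVol c d f lam := by
  have hnn : 0 ≤ᵐ[volume.restrict (Ioo c d)] f :=
    (ae_restrict_iff' measurableSet_Ioo).2 (Filter.Eventually.of_forall hpos)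
  rw [intervalIntegral.integral_of_le hcd, integral_Ioc_eq_integral_Ioo,
    (hf.1.mono_set Ioo_subset_Ioc_self).integral_eq_integral_meas_lt hnn]
  refine setIntegral_congr_fun measurableSet_Ioi fun lam _ => ?_
  rw [measureReal_def, Measure.restrict_apply' measurableSet_Ioo, inter_comm, superlevelVol]

end superlevelVol

theorem stmt_11 (f : ℝ → ℝ) (a b : ℝ) (ha : 0 ≤ a) (hab : a < b) (hb : b ≤ 1)
    (hmono : MonotoneOn f (Set.Icc 0 1))
    (hpos : ∀ x ∈ Set.Icc (0 : ℝ) 1, 0 ≤ f x) :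
    qInt a b f = qInt 0 b f - qInt 0 a f - 2 * (b - a) * ∫ t in (0 : ℝ)..a, f t := by
  have hIcc : Icc 0 b ⊆ Icc (0 : ℝ) 1 := Icc_subset_Icc_right hb
  have hM : ∀ x ∈ Ioo 0 b, f x ≤ f b := fun x hx =>
    hmono (hIcc (Ioo_subset_Icc_self hx)) (hIcc (right_mem_Icc.2 (ha.trans hab.le))) hx.2.le
  have hMa : ∀ x ∈ Ioo 0 a, f x ≤ f b := fun x hx => hM x (Ioo_subset_Ioo_right hab.le hx)
  have hIcca : Icc 0 a ⊆ Icc (0 : ℝ) 1 := Icc_subset_Icc_right (hab.le.trans hb)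
  have hlayer : ∫ t in (0 : ℝ)..a, f t = ∫ lam in Ioi 0, superlevelVol 0 a f lam :=
    intervalIntegral_eq_integral_superlevelVol ha
      ((hmono.mono (uIcc_of_le ha ▸ hIcca)).intervalIntegrable)
      fun x hx => hpos x (hIcca (Ioo_subset_Icc_self hx))
  have hsq := integrableOn_sq_superlevelVol hM
  have hsqa := integrableOn_sq_superlevelVol hMa
  rw [qInt_eq_integral_sq_superlevelVol, qInt_eq_integral_sq_superlevelVol,
    qInt_eq_integral_sq_superlevelVol, hlayer, setIntegral_congr_fun measurableSet_Ioi fun lam _ =>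
      sq_superlevelVol_eq (hmono.mono (Ioo_subset_Icc_self.trans hIcc)) ha hab.le lam,
    integral_sub ?_ ((integrableOn_superlevelVol hMa).const_mul _), integral_sub hsq hsqa,
    integral_const_mul]
  exact hsq.sub hsqa
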